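/- arXiv:1812.06695 — 2 statements merged into one kernel-verified Lean document; each statement's English description precedes it below -/
import Mathlib

section
/- Let q : [0,T] → ℝ be continuous with q(t) > 0, let c₁, c₂ : [0,T] → ℝ be continuous with c₂(t) > 0, let p > 1, and let q_T ≥ 0. Then the backward ODE ξ̇(t) + q(t) + c₁(t)·ξ(t) − c₂(t)·ξ(t)^p = 0 with terminal condition ξ(T) = q_T has a unique solution on [0,T], and this solution satisfies ξ(t) > 0 for all t ∈ [0,T). -/
/-!
The field `F t x = -q t - c₁ t x + c₂ t x ^ p` points strictly down at `x = 0` (where it equals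
`-q t < 0`) and, since `c₂ > 0` and `p > 1`, strictly up at every large enough level `x = M`.
Run backward from `T`, a solution can therefore never leave the box `[0, T] × [0, M]`, and before
time `T` it cannot even touch `0`. On this box `x ↦ x ^ p` is Lipschitz, so the
Picard–Lindelöf theorem applied to the field frozen outside the box gives a global solution, and
the Lipschitz uniqueness theorem shows that any two solutions agree.
-/

open Set Filter Topology Function
open scoped NNReal

theorem nonneg_of_hasDerivAt_neg_at_zeros {g g' : ℝ → ℝ} {a b : ℝ}
    (hg : ∀ t ∈ Icc a b, HasDerivAt g (g' t) t) (hb : 0 ≤ g b)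
    (hzero : ∀ t ∈ Ioc a b, g t = 0 → g' t < 0) : ∀ t ∈ Icc a b, 0 ≤ g t := by
  -- reversing time turns this into the forward fencing theorem for `s ↦ -g (-s)` below `0`
  have hrev : ∀ s ∈ Icc (-b) (-a), HasDerivAt (fun s => -g (-s)) (g' (-s)) s := fun s hs => by
    have h := ((hg (-s) (neg_mem_Icc_iff.2 hs)).comp s (hasDerivAt_neg s)).neg
    rwa [mul_neg_one, neg_neg] at h
  intro t ht
  have := image_le_of_deriv_right_lt_deriv_boundary (B := 0) (B' := 0)
    (fun s hs => (hrev s hs).continuousAt.continuousWithinAt)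
    (fun s hs => (hrev s (Ico_subset_Icc_self hs)).hasDerivWithinAt)
    (by simpa using hb) (fun _ => hasDerivAt_const _ _)
    (fun s hs h0 => hzero (-s) (neg_mem_Ioc_iff.2 hs) (neg_eq_zero.1 h0))
    (x := -t) (neg_mem_Icc_iff.1 (by rwa [neg_neg]))
  simpa using this

theorem pos_of_hasDerivAt_neg_at_zeros {g g' : ℝ → ℝ} {a b : ℝ}
    (hg : ∀ t ∈ Icc a b, HasDerivAt g (g' t) t) (hb : 0 ≤ g b)
    (hzero : ∀ t ∈ Icc a b, g t = 0 → g' t < 0) : ∀ t ∈ Ico a b, 0 < g t := by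
  have hnonneg :=
    nonneg_of_hasDerivAt_neg_at_zeros hg hb fun t ht => hzero t (Ioc_subset_Icc_self ht)
  intro t ht
  have htIcc := Ico_subset_Icc_self ht
  refine (hnonneg t htIcc).lt_of_ne' fun h0 => ?_
  have hslope : ∀ᶠ s in 𝓝[>] t, slope g t s < 0 :=
    (hg t htIcc).hasDerivWithinAt.limsup_slope_le' (lt_irrefl t) (hzero t htIcc h0)
  obtain ⟨s, hs, hts⟩ := (hslope.and (Ioc_mem_nhdsGT ht.2)).exists
  rw [slope_def_field, h0, sub_zero] at hs
  exact (div_nonneg (hnonneg s ⟨ht.1.trans hts.1.le, hts.2⟩) (sub_nonneg.2 hts.1.le)).not_gt hs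

theorem mapsTo_Icc_of_hasDerivAt_of_neg_of_pos {F : ℝ → ℝ → ℝ} {ζ : ℝ → ℝ} {a b lo hi : ℝ}
    (hζ : ∀ t ∈ Icc a b, HasDerivAt ζ (F t (ζ t)) t)
    (hlo : ∀ t ∈ Icc a b, F t lo < 0) (hhi : ∀ t ∈ Icc a b, 0 < F t hi)
    (hb : ζ b ∈ Icc lo hi) : MapsTo ζ (Icc a b) (Icc lo hi) := by
  have hge := nonneg_of_hasDerivAt_neg_at_zeros (g := fun t => ζ t - lo)
    (fun t ht => (hζ t ht).sub_const lo) (sub_nonneg.2 hb.1) fun t ht h0 => by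
      rw [sub_eq_zero.1 h0]; exact hlo t (Ioc_subset_Icc_self ht)
  have hle := nonneg_of_hasDerivAt_neg_at_zeros (g := fun t => hi - ζ t)
    (fun t ht => (hζ t ht).const_sub hi) (sub_nonneg.2 hb.2) fun t ht h0 => by
      rw [← sub_eq_zero.1 h0]; linarith [hhi t (Ioc_subset_Icc_self ht)]
  exact fun t ht => ⟨sub_nonneg.1 (hge t ht), sub_nonneg.1 (hle t ht)⟩

theorem exists_hasDerivWithinAt_of_lipschitzWith {E : Type*} [NormedAddCommGroup E]
    [NormedSpace ℝ E] [CompleteSpace E] {f : ℝ → E → E} {a b t₀ : ℝ} (ht₀ : t₀ ∈ Icc a b)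
    (x₀ : E) {L K : ℝ≥0} (hlip : ∀ t ∈ Icc a b, LipschitzWith K (f t))
    (hcont : ∀ x, ContinuousOn (f · x) (Icc a b)) (hbound : ∀ t ∈ Icc a b, ∀ x, ‖f t x‖ ≤ L) :
    ∃ α : ℝ → E, α t₀ = x₀ ∧ ∀ t ∈ Icc a b, HasDerivWithinAt α (f t (α t)) (Icc a b) t := by
  have hpl : IsPicardLindelof f (tmin := a) (tmax := b) ⟨t₀, ht₀⟩ x₀
      (L * (b - a).toNNReal) 0 L K :=
    { lipschitzOnWith := fun t ht => (hlip t ht).lipschitzOnWith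
      continuousOn := fun x _ => hcont x
      norm_le := fun t ht x _ => hbound t ht x
      mul_max_le := by
        rw [NNReal.coe_mul, Real.coe_toNNReal _ (by linarith [ht₀.1, ht₀.2]), NNReal.coe_zero,
          sub_zero]
        exact mul_le_mul_of_nonneg_left (max_le (by linarith [ht₀.1]) (by linarith [ht₀.2]))
          L.2 }
  exact hpl.exists_eq_forall_mem_Icc_hasDerivWithinAt₀

theorem exists_hasDerivAt_of_neg_of_pos {F : ℝ → ℝ → ℝ} {a b lo hi x₀ : ℝ} {K : ℝ≥0}
    (hab : a ≤ b) (hF : ContinuousOn (uncurry F) (Icc a b ×ˢ Icc lo hi))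
    (hlip : ∀ t ∈ Icc a b, LipschitzOnWith K (F t) (Icc lo hi))
    (hlo : ∀ t ∈ Icc a b, F t lo < 0) (hhi : ∀ t ∈ Icc a b, 0 < F t hi)
    (hx₀ : x₀ ∈ Icc lo hi) :
    ∃ ξ : ℝ → ℝ, ξ b = x₀ ∧ ∀ t ∈ Icc a b, HasDerivAt ξ (F t (ξ t)) t := by
  have hlh : lo ≤ hi := hx₀.1.trans hx₀.2
  -- frozen outside the box, `F` becomes globally Lipschitz and bounded; solving on a larger time
  -- interval then gives two-sided derivatives on all of `[a, b]`
  let G : ℝ → ℝ → ℝ := fun t x => F (projIcc a b hab t) (projIcc lo hi hlh x)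
  have hGF : ∀ t ∈ Icc a b, ∀ x ∈ Icc lo hi, G t x = F t x := fun t ht x hx => by
    simp only [G, projIcc_of_mem _ ht, projIcc_of_mem _ hx]
  obtain ⟨L, hL⟩ := (isCompact_Icc.prod isCompact_Icc).exists_bound_of_continuousOn hF
  obtain ⟨ξ, hξb, hξ⟩ := exists_hasDerivWithinAt_of_lipschitzWith (f := G) (a := a - 1)
    (b := b + 1) (t₀ := b) ⟨by linarith, by linarith⟩ x₀ (L := L.toNNReal)
    (fun t _ => by
      have h := (hlip _ (projIcc a b hab t).2).to_restrict.comp (LipschitzWith.projIcc hlh)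
      rwa [mul_one] at h)
    (fun x => (hF.comp_continuous
      ((continuous_subtype_val.comp (continuous_projIcc (h := hab))).prodMk continuous_const)
      fun t => ⟨(projIcc a b hab t).2, (projIcc lo hi hlh x).2⟩).continuousOn)
    (fun t _ x => (hL (_, _) ⟨(projIcc a b hab t).2, (projIcc lo hi hlh x).2⟩).trans
      (Real.le_coe_toNNReal L))
  have hξd : ∀ t ∈ Icc a b, HasDerivAt ξ (G t (ξ t)) t := fun t ht =>
    (hξ t ⟨by linarith [ht.1], by linarith [ht.2]⟩).hasDerivAt
      (Icc_mem_nhds (by linarith [ht.1]) (by linarith [ht.2]))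
  have hξmem : MapsTo ξ (Icc a b) (Icc lo hi) :=
    mapsTo_Icc_of_hasDerivAt_of_neg_of_pos hξd
      (fun t ht => by rw [hGF t ht lo ⟨le_rfl, hlh⟩]; exact hlo t ht)
      (fun t ht => by rw [hGF t ht hi ⟨hlh, le_rfl⟩]; exact hhi t ht) (hξb ▸ hx₀)
  exact ⟨ξ, hξb, fun t ht => hGF t ht _ (hξmem ht) ▸ hξd t ht⟩

theorem eqOn_of_hasDerivAt_of_lipschitzOnWith {E : Type*} [NormedAddCommGroup E] [NormedSpace ℝ E]
    {F : ℝ → E → E} {ξ ζ : ℝ → E} {a b : ℝ} {s : Set E} {K : ℝ≥0}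
    (hlip : ∀ t ∈ Icc a b, LipschitzOnWith K (F t) s)
    (hξ : ∀ t ∈ Icc a b, HasDerivAt ξ (F t (ξ t)) t)
    (hζ : ∀ t ∈ Icc a b, HasDerivAt ζ (F t (ζ t)) t)
    (hξs : MapsTo ξ (Icc a b) s) (hζs : MapsTo ζ (Icc a b) s) (hb : ξ b = ζ b) :
    EqOn ξ ζ (Icc a b) :=
  ODE_solution_unique_of_mem_Icc_left (fun t ht => hlip t (Ioc_subset_Icc_self ht))
    (fun t ht => (hξ t ht).continuousAt.continuousWithinAt)
    (fun t ht => (hξ t (Ioc_subset_Icc_self ht)).hasDerivWithinAt)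
    (fun _ ht => hξs (Ioc_subset_Icc_self ht))
    (fun t ht => (hζ t ht).continuousAt.continuousWithinAt)
    (fun t ht => (hζ t (Ioc_subset_Icc_self ht)).hasDerivWithinAt)
    (fun _ ht => hζs (Ioc_subset_Icc_self ht)) hb

noncomputable def riccatiField (q c₁ c₂ : ℝ → ℝ) (p t x : ℝ) : ℝ :=
  -(q t) - c₁ t * x + c₂ t * x ^ p

section Riccati

variable {q c₁ c₂ : ℝ → ℝ} {p : ℝ} {s : Set ℝ}

theorem riccatiField_zero (hp : p ≠ 0) (t : ℝ) : riccatiField q c₁ c₂ p t 0 = -q t := by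
  simp [riccatiField, Real.zero_rpow hp]

theorem continuousOn_riccatiField (hq : ContinuousOn q s) (hc₁ : ContinuousOn c₁ s)
    (hc₂ : ContinuousOn c₂ s) (hp : 0 ≤ p) :
    ContinuousOn (uncurry (riccatiField q c₁ c₂ p)) (s ×ˢ univ) := by
  have hfst : MapsTo Prod.fst (s ×ˢ (univ : Set ℝ)) s := fun z hz => hz.1
  exact ((hq.comp continuousOn_fst hfst).neg.sub ((hc₁.comp continuousOn_fst hfst).mul
    continuousOn_snd)).add ((hc₂.comp continuousOn_fst hfst).mul
    (continuousOn_snd.rpow_const fun _ _ => Or.inr hp))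

theorem exists_lipschitzOnWith_riccatiField (hs : IsCompact s) (hc₁ : ContinuousOn c₁ s)
    (hc₂ : ContinuousOn c₂ s) (hp : 1 ≤ p) (M : ℝ) :
    ∃ K, ∀ t ∈ s, LipschitzOnWith K (riccatiField q c₁ c₂ p t) (Icc 0 M) := by
  obtain ⟨Kp, hKp⟩ := ((Real.contDiff_rpow_const_of_le (n := 1) (by simpa using hp)).contDiffOn
    (s := Icc 0 M)).exists_lipschitzOnWith one_ne_zero (convex_Icc 0 M) isCompact_Icc
  obtain ⟨C₁, hC₁⟩ := hs.exists_bound_of_continuousOn hc₁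
  obtain ⟨C₂, hC₂⟩ := hs.exists_bound_of_continuousOn hc₂
  refine ⟨C₁.toNNReal + C₂.toNNReal * Kp, fun t ht => LipschitzOnWith.of_dist_le_mul
    fun x hx y hy => ?_⟩
  have hpow : |x ^ p - y ^ p| ≤ Kp * |x - y| := by
    simpa only [Real.dist_eq] using hKp.dist_le_mul x hx y hy
  calc dist (riccatiField q c₁ c₂ p t x) (riccatiField q c₁ c₂ p t y)
      = |c₂ t * (x ^ p - y ^ p) - c₁ t * (x - y)| := by
        rw [Real.dist_eq, riccatiField, riccatiField]; ring_nf
    _ ≤ |c₂ t| * |x ^ p - y ^ p| + |c₁ t| * |x - y| := by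
        rw [← abs_mul, ← abs_mul]; exact abs_sub _ _
    _ ≤ C₂.toNNReal * (Kp * |x - y|) + C₁.toNNReal * |x - y| := by
        gcongr
        · exact (hC₂ t ht).trans (Real.le_coe_toNNReal C₂)
        · exact (hC₁ t ht).trans (Real.le_coe_toNNReal C₁)
    _ = ↑(C₁.toNNReal + C₂.toNNReal * Kp) * dist x y := by
        push_cast; rw [Real.dist_eq]; ring

theorem eventually_riccatiField_pos (hs : IsCompact s) (hq : ContinuousOn q s)
    (hc₁ : ContinuousOn c₁ s) (hc₂ : ContinuousOn c₂ s) (hc₂pos : ∀ t ∈ s, 0 < c₂ t)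
    (hp : 1 < p) : ∀ᶠ M in atTop, ∀ t ∈ s, 0 < riccatiField q c₁ c₂ p t M := by
  obtain ⟨m, hm, hmc₂⟩ := hs.exists_forall_le' hc₂ hc₂pos
  obtain ⟨Q, hQ⟩ := hs.exists_bound_of_continuousOn hq
  obtain ⟨C₁, hC₁⟩ := hs.exists_bound_of_continuousOn hc₁
  -- `c₂ M ^ p ≥ m M ^ (p - 1) · M` outgrows the linear part `q + c₁ M`
  filter_upwards [eventually_ge_atTop 1,
    (tendsto_rpow_atTop (sub_pos.2 hp)).eventually_gt_atTop ((Q + C₁) / m)] with M hM1 hMp t ht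
  have hpow : M ^ p = M ^ (p - 1) * M := by
    rw [← Real.rpow_add_one (by positivity)]; ring_nf
  have hgrowth : Q + C₁ < m * M ^ (p - 1) := by rwa [div_lt_iff₀' hm] at hMp
  have hq' := abs_le.1 (Real.norm_eq_abs _ ▸ hQ t ht)
  have hc₁' := abs_le.1 (Real.norm_eq_abs _ ▸ hC₁ t ht)
  have hc₂' : m * M ^ p ≤ c₂ t * M ^ p := by gcongr; exact hmc₂ t ht
  unfold riccatiField
  nlinarith

end Riccati

/-- Existence, uniqueness and positivity for the scalar Riccati-type backward ODE
`ξ̇ + q + c₁ ξ - c₂ ξ^p = 0`, `ξ(T) = q_T ≥ 0`, with `p > 1`. -/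
theorem stmt_6 (T : ℝ) (hT : 0 < T) (q c₁ c₂ : ℝ → ℝ)
    (hq : ContinuousOn q (Set.Icc 0 T)) (hqpos : ∀ t ∈ Set.Icc 0 T, 0 < q t)
    (hc₁ : ContinuousOn c₁ (Set.Icc 0 T)) (hc₂ : ContinuousOn c₂ (Set.Icc 0 T))
    (hc₂pos : ∀ t ∈ Set.Icc 0 T, 0 < c₂ t) (p : ℝ) (hp : 1 < p)
    (qT : ℝ) (hqT : 0 ≤ qT) :
    ∃ ξ : ℝ → ℝ, ξ T = qT ∧
      (∀ t ∈ Set.Icc 0 T, HasDerivAt ξ (-(q t) - c₁ t * ξ t + c₂ t * ξ t ^ p) t) ∧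
      (∀ t ∈ Set.Ico 0 T, 0 < ξ t) ∧
      ∀ ζ : ℝ → ℝ, ζ T = qT →
        (∀ t ∈ Set.Icc 0 T, HasDerivAt ζ (-(q t) - c₁ t * ζ t + c₂ t * ζ t ^ p) t) →
        Set.EqOn ζ ξ (Set.Icc 0 T) := by
  obtain ⟨M, hMpos, hqTM⟩ := ((eventually_riccatiField_pos isCompact_Icc hq hc₁ hc₂ hc₂pos
    hp).and (eventually_ge_atTop qT)).exists
  have hzero : ∀ t ∈ Icc 0 T, riccatiField q c₁ c₂ p t 0 < 0 := fun t ht => by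
    rw [riccatiField_zero (zero_lt_one.trans hp).ne']
    exact neg_neg_of_pos (hqpos t ht)
  obtain ⟨K, hK⟩ := exists_lipschitzOnWith_riccatiField isCompact_Icc hc₁ hc₂ hp.le M
  have hbox : ∀ ζ : ℝ → ℝ, ζ T = qT →
      (∀ t ∈ Icc 0 T, HasDerivAt ζ (riccatiField q c₁ c₂ p t (ζ t)) t) →
      MapsTo ζ (Icc 0 T) (Icc 0 M) := fun ζ hζT hζ =>
    mapsTo_Icc_of_hasDerivAt_of_neg_of_pos hζ hzero hMpos (by rw [hζT]; exact ⟨hqT, hqTM⟩)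
  have hcont := (continuousOn_riccatiField hq hc₁ hc₂ (zero_le_one.trans hp.le)).mono
    (prod_mono subset_rfl (subset_univ (Icc 0 M)))
  obtain ⟨ξ, hξT, hξ⟩ :=
    exists_hasDerivAt_of_neg_of_pos hT.le hcont hK hzero hMpos ⟨hqT, hqTM⟩
  refine ⟨ξ, hξT, hξ, pos_of_hasDerivAt_neg_at_zeros hξ (hξT ▸ hqT) fun t ht h0 => ?_,
    fun ζ hζT hζ => ?_⟩
  · rw [h0]
    exact hzero t ht
  · exact eqOn_of_hasDerivAt_of_lipschitzOnWith hK hζ hξ (hbox ζ hζT hζ) (hbox ξ hξT hξ)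
      (hζT.trans hξT.symm)
end

section
/- Let Q be an S×S generator matrix (q_{ss'} ≥ 0 for s ≠ s', rows summing to 0), and suppose α : [0,T] → ℝ^S is a C¹ solution of the backward system α̇_s(t) + g_s(t) + c_s(t)·α_s(t) + ∑_{s'}(α_{s'}(t) − α_s(t))·q_{ss'} − d_s(t)·α_s(t)^p = 0 with α_s(T) = q_{T,s} ≥ 0, where g_s(t) > 0, c_s, d_s continuous, d_s ≥ 0, and p > 1. Then α_s(t) ≥ 0 for all s and all t ∈ [0,T] (where the solution is defined and, at points where α_s < 0, α_s^p is interpreted as 0). -/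
/-!
On a face `{α_s = 0}` of the nonnegative orthant the power term vanishes and the equation gives
`α̇_s = -g_s - ∑_{s' ≠ s} α_{s'} q_{ss'} < 0`, so `α_s` is strictly positive just before any time
at which it vanishes. Hence the closed set `{t | α t ≥ 0}`, which contains `T`, extends a little
to the left of each of its points in `(0, T]`, and continuous induction downwards from `T`
covers `[0, T]`.
-/

open Set Filter Topology

theorem HasDerivWithinAt.eventually_nhdsLT_gt {φ : ℝ → ℝ} {D τ : ℝ}
    (h : HasDerivWithinAt φ D (Iio τ) τ) (hD : D < 0) : ∀ᶠ u in 𝓝[<] τ, φ τ < φ u := by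
  have hslope : ∀ᶠ u in 𝓝[<] τ, slope φ τ u < 0 :=
    ((hasDerivWithinAt_iff_tendsto_slope' self_notMem_Iio).1 h).eventually_lt_const hD
  filter_upwards [hslope, self_mem_nhdsWithin] with u hu (hut : u < τ)
  rw [slope_def_field, div_neg_iff] at hu
  rcases hu with hu | hu <;> linarith [hu.1, hu.2]

theorem HasDerivWithinAt.eventually_nhdsLT_pos {φ : ℝ → ℝ} {D τ : ℝ}
    (h : HasDerivWithinAt φ D (Iio τ) τ) (hτ : 0 ≤ φ τ) (hD : φ τ = 0 → D < 0) :
    ∀ᶠ u in 𝓝[<] τ, 0 < φ u := by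
  rcases hτ.eq_or_lt with hzero | hpos
  · simpa only [← hzero] using h.eventually_nhdsLT_gt (hD hzero.symm)
  · exact Tendsto.eventually_const_lt hpos h.continuousWithinAt

theorem nonneg_on_Icc_of_deriv_neg_at_zero {ι : Type*} [Finite ι] {f f' : ℝ → ι → ℝ} {a b : ℝ}
    (hf : ContinuousOn f (Icc a b))
    (hf' : ∀ t ∈ Ioc a b, ∀ i, HasDerivWithinAt (fun u => f u i) (f' t i) (Iio t) t)
    (hb : 0 ≤ f b) (hinward : ∀ t ∈ Ioc a b, 0 ≤ f t → ∀ i, f t i = 0 → f' t i < 0) :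
    ∀ t ∈ Icc a b, 0 ≤ f t := by
  have hclosed : IsClosed ({t | 0 ≤ f t} ∩ Icc a b) := by
    rw [inter_comm]
    exact hf.preimage_isClosed_of_isClosed isClosed_Icc isClosed_Ici
  refine hclosed.Icc_subset_of_forall_exists_lt hb fun t ⟨ht, htab⟩ y hy => ?_
  have hleft : ∀ᶠ u in 𝓝[<] t, 0 ≤ f u := by
    filter_upwards [eventually_all.2 fun i =>
      (hf' t htab i).eventually_nhdsLT_pos (ht i) (hinward t htab ht i)] with u hu
    exact fun i => (hu i).le
  exact (hleft.and (Ico_mem_nhdsLT hy)).exists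

theorem stmt_18_general {S : Type*} [Fintype S] (T : ℝ)
    (Q : Matrix S S ℝ) (hQoff : ∀ s s', s ≠ s' → 0 ≤ Q s s')
    (g c d : ℝ → S → ℝ) (p : ℝ) (hp : 1 < p)
    (hg : ∀ t ∈ Set.Icc 0 T, ∀ s, 0 < g t s)
    (α : ℝ → S → ℝ) (qT : S → ℝ) (hqT : ∀ s, 0 ≤ qT s)
    (hαT : ∀ s, α T s = qT s)
    (hODE : ∀ t ∈ Set.Icc 0 T, ∀ s, HasDerivAt (fun t => α t s)
      (-(g t s) - c t s * α t s - (∑ s', (α t s' - α t s) * Q s s') +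
        d t s * (max (α t s) 0) ^ p) t) :
    ∀ t ∈ Set.Icc 0 T, ∀ s, 0 ≤ α t s := by
  refine fun t ht => nonneg_on_Icc_of_deriv_neg_at_zero
    (continuousOn_pi.2 fun s u hu => (hODE u hu s).continuousAt.continuousWithinAt)
    (fun u hu s => (hODE u (Ioc_subset_Icc_self hu) s).hasDerivWithinAt)
    (fun s => hαT s ▸ hqT s) (fun u hu hαu s hzero => ?_) t ht
  have hcoupling : 0 ≤ ∑ s', (α u s' - α u s) * Q s s' :=
    Finset.sum_nonneg fun s' _ => by
      rcases eq_or_ne s s' with rfl | hne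
      · simp
      · exact mul_nonneg (by simpa [hzero] using hαu s') (hQoff s s' hne)
  have hpow : (max (α u s) 0) ^ p = 0 := by
    rw [hzero, max_self, Real.zero_rpow (zero_lt_one.trans hp).ne']
  rw [hpow]
  rw [hzero] at hcoupling ⊢
  linarith [hg u (Ioc_subset_Icc_self hu) s]

/-- Backward invariance of the nonnegative orthant for the coupled coefficient
system of the Gauss–Volterra MFTG: solutions with nonnegative terminal data stay
nonnegative on `[0,T]`. -/
theorem stmt_18 {S : Type*} [Fintype S] (T : ℝ) (hT : 0 < T)
    (Q : Matrix S S ℝ) (hQoff : ∀ s s', s ≠ s' → 0 ≤ Q s s')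
    (hQrow : ∀ s, ∑ s', Q s s' = 0)
    (g c d : ℝ → S → ℝ) (p : ℝ) (hp : 1 < p)
    (hg : ∀ t ∈ Set.Icc 0 T, ∀ s, 0 < g t s)
    (hc : ∀ s, ContinuousOn (fun t => c t s) (Set.Icc 0 T))
    (hd : ∀ s, ContinuousOn (fun t => d t s) (Set.Icc 0 T))
    (hdpos : ∀ t ∈ Set.Icc 0 T, ∀ s, 0 ≤ d t s)
    (α : ℝ → S → ℝ) (qT : S → ℝ) (hqT : ∀ s, 0 ≤ qT s)
    (hαT : ∀ s, α T s = qT s)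
    (hODE : ∀ t ∈ Set.Icc 0 T, ∀ s, HasDerivAt (fun t => α t s)
      (-(g t s) - c t s * α t s - (∑ s', (α t s' - α t s) * Q s s') +
        d t s * (max (α t s) 0) ^ p) t) :
    ∀ t ∈ Set.Icc 0 T, ∀ s, 0 ≤ α t s :=
  stmt_18_general T Q hQoff g c d p hp hg α qT hqT hαT hODE
end
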